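/- Laplace approximation in one dimension: let f : ℝ → ℝ be C², attaining a strict global maximum at x₀ ∈ (a,b) with f''(x₀) < 0, satisfying suitable regularity (e.g., f(x) < f(x₀) uniformly away from x₀). Then ∫ₐᵇ e^{λf(x)} dx · √(λ|f''(x₀)|/(2π)) · e^{−λf(x₀)} → 1 as λ → ∞. -/

import Mathlib

/-!
Write `f x - f x₀ = (x - x₀) ^ 2 * Q x`, where `Q` is the second-order difference quotient,
extended continuously by `Q x₀ = f''(x₀) / 2` (L'Hôpital, using `f'(x₀) = 0`). Since `Q < 0`
on the compact `[a, b]`, we get `Q ≤ -c` there for some `c > 0`. The substitution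
`u = √λ (x - x₀)` turns `√λ ∫ e^{λ (f x - f x₀)}` into `∫ e^{u² Q(x₀ + u / √λ)}` over an interval
growing to all of `ℝ`; the integrand tends to `e^{u² f''(x₀) / 2}` and is dominated by `e^{-c u²}`,
so dominated convergence gives the Gaussian integral `√(2π / |f''(x₀)|)`.
-/

open Real Filter MeasureTheory Set Topology

theorem tendsto_sub_div_sq_of_deriv_eq_zero {f : ℝ → ℝ} {x₀ : ℝ}
    (hf : ∀ᶠ x in 𝓝 x₀, DifferentiableAt ℝ f x) (hf' : DifferentiableAt ℝ (deriv f) x₀)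
    (h0 : deriv f x₀ = 0) :
    Tendsto (fun x => (f x - f x₀) / (x - x₀) ^ 2) (𝓝[≠] x₀) (𝓝 (deriv (deriv f) x₀ / 2)) := by
  have hslope : Tendsto (fun x => deriv f x / (2 * (x - x₀))) (𝓝[≠] x₀)
      (𝓝 (deriv (deriv f) x₀ / 2)) := by
    refine ((hasDerivAt_iff_tendsto_slope.mp hf'.hasDerivAt).div_const 2).congr'
      (eventually_nhdsWithin_of_forall fun x _ => ?_)
    rw [slope_def_field, h0, sub_zero, div_div, mul_comm]
  refine HasDerivAt.lhopital_zero_nhdsNE ?_ ?_ ?_ ?_ ?_ hslope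
  · exact (eventually_nhdsWithin_of_eventually_nhds hf).mono fun x hx =>
      hx.hasDerivAt.sub_const (f x₀)
  · exact Eventually.of_forall fun x => by
      simpa using ((hasDerivAt_id x).sub_const x₀).fun_pow 2
  · exact eventually_nhdsWithin_of_forall fun x hx => mul_ne_zero two_ne_zero (sub_ne_zero.mpr hx)
  · refine tendsto_nhdsWithin_of_tendsto_nhds ?_
    simpa using hf.self_of_nhds.continuousAt.tendsto.sub_const (f x₀)
  · refine tendsto_nhdsWithin_of_tendsto_nhds ?_
    simpa using ((continuous_sub_right x₀).fun_pow 2).tendsto x₀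

noncomputable def quadraticSlope (f : ℝ → ℝ) (x₀ : ℝ) : ℝ → ℝ :=
  Function.update (fun x => (f x - f x₀) / (x - x₀) ^ 2) x₀ (deriv (deriv f) x₀ / 2)

theorem sub_eq_sq_mul_quadraticSlope (f : ℝ → ℝ) (x₀ x : ℝ) :
    f x - f x₀ = (x - x₀) ^ 2 * quadraticSlope f x₀ x := by
  rcases eq_or_ne x x₀ with rfl | hx
  · simp
  · have : (x - x₀) ^ 2 ≠ 0 := pow_ne_zero 2 (sub_ne_zero.mpr hx)
    rw [quadraticSlope, Function.update_of_ne hx, mul_div_cancel₀ _ this]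

theorem continuous_quadraticSlope {f : ℝ → ℝ} {x₀ : ℝ} (hf : Differentiable ℝ f)
    (hf' : DifferentiableAt ℝ (deriv f) x₀) (h0 : deriv f x₀ = 0) :
    Continuous (quadraticSlope f x₀) := by
  refine continuous_iff_continuousAt.mpr fun x => ?_
  rcases eq_or_ne x x₀ with rfl | hx
  · exact continuousAt_update_same.mpr
      (tendsto_sub_div_sq_of_deriv_eq_zero (Eventually.of_forall hf) hf' h0)
  · rw [quadraticSlope, continuousAt_update_of_ne hx]
    exact (hf.continuous.continuousAt.sub continuousAt_const).div (by fun_prop)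
      (pow_ne_zero 2 (sub_ne_zero.mpr hx))

section Rescaling

variable {Q : ℝ → ℝ} {a b x₀ s u : ℝ}

theorem add_div_mem_Icc_of_mem_Ioc (hs : 0 < s) (hu : u ∈ Ioc (s * (a - x₀)) (s * (b - x₀))) :
    x₀ + u / s ∈ Icc a b := by
  have h₁ : a - x₀ < u / s := by rw [lt_div_iff₀ hs, mul_comm]; exact hu.1
  have h₂ : u / s ≤ b - x₀ := by rw [div_le_iff₀ hs, mul_comm]; exact hu.2
  constructor <;> linarith

/-- The integrand of `∫ x in a..b, exp (s ^ 2 * ((x - x₀) ^ 2 * Q x))` after the substitution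
`u = s * (x - x₀)`. -/
noncomputable def rescaledIntegrand (Q : ℝ → ℝ) (a b x₀ s : ℝ) : ℝ → ℝ :=
  (Ioc (s * (a - x₀)) (s * (b - x₀))).indicator fun u => exp (u ^ 2 * Q (x₀ + u / s))

theorem mul_integral_exp_eq_integral_rescaledIntegrand (hab : a ≤ b) (hs : 0 < s) :
    s * ∫ x in a..b, exp (s ^ 2 * ((x - x₀) ^ 2 * Q x)) = ∫ u, rescaledIntegrand Q a b x₀ s u := by
  have hsub := intervalIntegral.integral_comp_mul_sub
    (a := a) (b := b) (fun u => exp (u ^ 2 * Q (x₀ + u / s))) hs.ne' (s * x₀)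
  have hexponent : ∀ x, (s * x - s * x₀) ^ 2 * Q (x₀ + (s * x - s * x₀) / s) =
      s ^ 2 * ((x - x₀) ^ 2 * Q x) := fun x => by
    rw [← mul_sub, mul_div_cancel_left₀ _ hs.ne', add_sub_cancel]; ring
  simp only [hexponent] at hsub
  rw [hsub, smul_eq_mul, ← mul_assoc, mul_inv_cancel₀ hs.ne', one_mul, ← mul_sub, ← mul_sub,
    intervalIntegral.integral_of_le (by gcongr), rescaledIntegrand,
    integral_indicator measurableSet_Ioc]

theorem tendsto_rescaledIntegrand (hx₀ : x₀ ∈ Ioo a b) (hQ : ContinuousAt Q x₀) (u : ℝ) :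
    Tendsto (fun s => rescaledIntegrand Q a b x₀ s u) atTop (𝓝 (exp (u ^ 2 * Q x₀))) := by
  have hmem : ∀ᶠ s in atTop, u ∈ Ioc (s * (a - x₀)) (s * (b - x₀)) :=
    ((tendsto_id.atTop_mul_const_of_neg (sub_neg.mpr hx₀.1)).eventually_lt_atBot u).and
      ((tendsto_id.atTop_mul_const (sub_pos.mpr hx₀.2)).eventually_ge_atTop u)
  have hQu : Tendsto (fun s : ℝ => Q (x₀ + u / s)) atTop (𝓝 (Q x₀)) := by
    refine hQ.tendsto.comp ?_
    simpa using (tendsto_const_nhds (x := x₀)).add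
      ((tendsto_const_nhds (x := u)).div_atTop tendsto_id)
  refine ((continuous_exp.tendsto _).comp (hQu.const_mul (u ^ 2))).congr' ?_
  filter_upwards [hmem] with s hs
  simp [rescaledIntegrand, hs]

theorem norm_rescaledIntegrand_le {c : ℝ} (hs : 0 < s) (hQc : ∀ x ∈ Icc a b, Q x ≤ -c) :
    ‖rescaledIntegrand Q a b x₀ s u‖ ≤ exp (-c * u ^ 2) := by
  by_cases hu : u ∈ Ioc (s * (a - x₀)) (s * (b - x₀))
  · simp only [rescaledIntegrand, indicator_of_mem hu, norm_eq_abs, abs_exp]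
    have := hQc _ (add_div_mem_Icc_of_mem_Ioc hs hu)
    exact exp_le_exp.mpr (by nlinarith [sq_nonneg u])
  · simp only [rescaledIntegrand, indicator_of_notMem hu, norm_zero]
    positivity

theorem aestronglyMeasurable_rescaledIntegrand (hQ : ContinuousOn Q (Icc a b)) (hs : 0 < s) :
    AEStronglyMeasurable (rescaledIntegrand Q a b x₀ s) volume := by
  refine (aestronglyMeasurable_indicator_iff measurableSet_Ioc).mpr
    (ContinuousOn.aestronglyMeasurable ?_ measurableSet_Ioc)
  exact continuous_exp.comp_continuousOn ((continuous_pow 2).continuousOn.mul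
    (hQ.comp (by fun_prop) fun u hu => add_div_mem_Icc_of_mem_Ioc hs hu))

end Rescaling

theorem tendsto_mul_integral_exp_sq_mul {Q : ℝ → ℝ} {a b x₀ : ℝ} (hx₀ : x₀ ∈ Ioo a b)
    (hQ : ContinuousOn Q (Icc a b)) (hneg : ∀ x ∈ Icc a b, Q x < 0) :
    Tendsto (fun s : ℝ => s * ∫ x in a..b, exp (s ^ 2 * ((x - x₀) ^ 2 * Q x))) atTop
      (𝓝 √(π / -Q x₀)) := by
  have hab : a ≤ b := (hx₀.1.trans hx₀.2).le
  obtain ⟨z, hz, hzmax⟩ := isCompact_Icc.exists_isMaxOn (nonempty_Icc.mpr hab) hQ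
  set c := -Q z with hc
  have hQc : ∀ x ∈ Icc a b, Q x ≤ -c := fun x hx => by rw [hc, neg_neg]; exact hzmax hx
  have hdct := tendsto_integral_filter_of_dominated_convergence (fun u => exp (-c * u ^ 2))
    ((eventually_gt_atTop 0).mono fun s hs => aestronglyMeasurable_rescaledIntegrand hQ hs)
    ((eventually_gt_atTop 0).mono fun s hs => .of_forall fun u => norm_rescaledIntegrand_le hs hQc)
    (integrable_exp_neg_mul_sq (neg_pos.mpr (hneg z hz)))
    (.of_forall (tendsto_rescaledIntegrand hx₀ (hQ.continuousAt (Icc_mem_nhds hx₀.1 hx₀.2))))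
  have hgauss : ∫ u, exp (u ^ 2 * Q x₀) = √(π / -Q x₀) := by
    simpa [mul_comm] using integral_gaussian (-Q x₀)
  rw [hgauss] at hdct
  refine hdct.congr' ((eventually_gt_atTop 0).mono fun s hs => ?_)
  exact (mul_integral_exp_eq_integral_rescaledIntegrand hab hs).symm

theorem tendsto_sqrt_mul_integral_exp_mul_sub {f : ℝ → ℝ} {a b x₀ : ℝ} (hx₀ : x₀ ∈ Ioo a b)
    (hf : Differentiable ℝ f) (hf' : DifferentiableAt ℝ (deriv f) x₀)
    (hmax : ∀ x ∈ Icc a b, x ≠ x₀ → f x < f x₀) (hf'' : deriv (deriv f) x₀ < 0) :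
    Tendsto (fun lam : ℝ => √lam * ∫ x in a..b, exp (lam * (f x - f x₀))) atTop
      (𝓝 √(2 * π / |deriv (deriv f) x₀|)) := by
  have hloc : IsLocalMax f x₀ := by
    refine Filter.eventually_of_mem (Ioo_mem_nhds hx₀.1 hx₀.2) fun x hx => ?_
    rcases eq_or_ne x x₀ with rfl | hne
    · exact le_rfl
    · exact (hmax x (Ioo_subset_Icc_self hx) hne).le
  have h0 : deriv f x₀ = 0 := hloc.deriv_eq_zero
  have hneg : ∀ x ∈ Icc a b, quadraticSlope f x₀ x < 0 := by
    intro x hx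
    rcases eq_or_ne x x₀ with rfl | hne
    · simp only [quadraticSlope, Function.update_self]
      linarith
    · have hsq : 0 < (x - x₀) ^ 2 := by have := sub_ne_zero.mpr hne; positivity
      have := hmax x hx hne
      rw [← sub_neg, sub_eq_sq_mul_quadraticSlope] at this
      exact (pos_iff_neg_of_mul_neg this).mp hsq
  have hlim := (tendsto_mul_integral_exp_sq_mul hx₀
    (continuous_quadraticSlope hf hf' h0).continuousOn hneg).comp tendsto_sqrt_atTop
  have hQ₀ : quadraticSlope f x₀ x₀ = deriv (deriv f) x₀ / 2 := Function.update_self ..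
  rw [hQ₀, show π / -(deriv (deriv f) x₀ / 2) = 2 * π / -deriv (deriv f) x₀ by ring,
    ← abs_of_neg hf''] at hlim
  refine hlim.congr' ((eventually_ge_atTop 0).mono fun lam hlam => ?_)
  simp only [Function.comp_apply, sq_sqrt hlam, ← sub_eq_sq_mul_quadraticSlope]

theorem stmt_19_general (a b x₀ : ℝ) (f : ℝ → ℝ)
    (hf : ContDiff ℝ 2 f) (hx₀ : x₀ ∈ Set.Ioo a b)
    (hmax : ∀ x ∈ Set.Icc a b, x ≠ x₀ → f x < f x₀)
    (hf'' : deriv (deriv f) x₀ < 0) :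
    Tendsto (fun lam : ℝ =>
        (∫ x in a..b, Real.exp (lam * f x)) *
          Real.sqrt (lam * |deriv (deriv f) x₀| / (2 * π)) *
          Real.exp (-lam * f x₀))
      atTop (nhds 1) := by
  have hlim := (tendsto_sqrt_mul_integral_exp_mul_sub hx₀ (hf.differentiable two_ne_zero)
    hf.differentiable_deriv_two.differentiableAt hmax hf'').mul_const
    √(|deriv (deriv f) x₀| / (2 * π))
  have hA : |deriv (deriv f) x₀| ≠ 0 := abs_ne_zero.mpr hf''.ne
  have hone : 2 * π / |deriv (deriv f) x₀| * (|deriv (deriv f) x₀| / (2 * π)) = 1 := by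
    field_simp
  rw [← sqrt_mul (by positivity), hone, sqrt_one] at hlim
  refine hlim.congr' ((eventually_ge_atTop 0).mono fun lam hlam => ?_)
  have hexp : ∀ x, exp (lam * (f x - f x₀)) = exp (lam * f x) * exp (-lam * f x₀) := fun x => by
    rw [← exp_add]; ring_nf
  simp only [hexp, intervalIntegral.integral_mul_const, mul_div_assoc, sqrt_mul hlam]
  ring

theorem stmt_19 (a b x₀ : ℝ) (f : ℝ → ℝ) (hab : a < b)
    (hf : ContDiff ℝ 2 f) (hx₀ : x₀ ∈ Set.Ioo a b)
    (hmax : ∀ x ∈ Set.Icc a b, x ≠ x₀ → f x < f x₀)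
    (hf'' : deriv (deriv f) x₀ < 0) :
    Tendsto (fun lam : ℝ =>
        (∫ x in a..b, Real.exp (lam * f x)) *
          Real.sqrt (lam * |deriv (deriv f) x₀| / (2 * π)) *
          Real.exp (-lam * f x₀))
      atTop (nhds 1) :=
  stmt_19_general a b x₀ f hf hx₀ hmax hf''
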